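/- Let L be a locally compact Hausdorff topological space and consider the real Banach space C₀(L). For every 0 < ε < 1/4, if f₀ ∈ S_{C₀(L)}, μ ∈ S_{C₀(L)*} and a bounded linear operator T : C₀(L) → C₀(L) with ‖T‖ = 1 satisfy μ(f₀) > 1 − ε²/50 and |μ(T f₀)| = 1, then there exist f₁ ∈ S_{C₀(L)} and ν ∈ S_{C₀(L)*} such that |ν(T f₁)| = ν(f₁) = 1, ‖f₁ − f₀‖ < ε and ‖ν − μ‖ < ε. In particular, every real space C₀(L) has property (nu). -/

import Mathlib

/-!
Put `s = μ (T f₀) = ±1` and `g = s • T f₀`, so that `μ g = 1 = ‖μ‖` and `‖g‖ ≤ 1`. Every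
estimate comes from testing `μ` against a function `W` with `|W| ≤ C` pointwise, which gives
`μ W ≤ C`; in measure language `μ` lives where `|g| = 1`, with the sign of `g`.
Let `ψ ∈ [0, 1]` be a continuous weight equal to `1` where `f₀ g ≥ 1 - ρ` and to `0` where
`f₀ g ≤ 1 - 2ρ`. Testing against `f₀ + (1 - ρψ) g` shows that `m = μ (ψ g)` is close to `1`
when `μ f₀` is, so `ν = m⁻¹ μ (ψ ·)` is close to `μ`. The function `f₁`, obtained from `f₀` by
clipping `f₀ / (1 - 2ρ)` to `[-1, 1]`, is close to `f₀` and equals `sign g` where `ψ > 0`, whence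
`ν f₁ = 1`. Finally `f₀` is the midpoint of `f₁` and `2 f₀ - f₁`, both in the unit ball, and
`|ν (T f₀)| = 1`, so `ν (T f₁) = ν (T f₀)`.
-/

open scoped ZeroAtInfty

/-- Property (nu) for a normed space. -/
def PropertyNu (𝕂 : Type*) [RCLike 𝕂] (X : Type*) [NormedAddCommGroup X]
    [NormedSpace 𝕂 X] : Prop :=
  ∀ ε : ℝ, 0 < ε → ∃ η : ℝ, 0 < η ∧
    ∀ (T : X →L[𝕂] X) (x₀ : X) (f₀ : X →L[𝕂] 𝕂),
      ‖T‖ = 1 → ‖x₀‖ = 1 → ‖f₀‖ = 1 → 1 - η < RCLike.re (f₀ x₀) → ‖f₀ (T x₀)‖ = 1 →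
      ∃ (S : X →L[𝕂] X) (x₁ : X) (f₁ : X →L[𝕂] 𝕂),
        ‖S‖ = 1 ∧ ‖x₁‖ = 1 ∧ ‖f₁‖ = 1 ∧ ‖f₁ (S x₁)‖ = 1 ∧ f₁ x₁ = 1 ∧
        ‖x₁ - x₀‖ < ε ∧ ‖f₁ - f₀‖ < ε ∧ ‖S - T‖ < ε

def clipUnit (t : ℝ) : ℝ := max (-1) (min 1 t)

lemma continuous_clipUnit : Continuous clipUnit :=
  continuous_const.max (continuous_const.min continuous_id)

lemma clipUnit_zero : clipUnit 0 = 0 := by norm_num [clipUnit]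

lemma abs_clipUnit_le (t : ℝ) : |clipUnit t| ≤ 1 :=
  abs_le.2 ⟨le_max_left _ _, max_le (by norm_num) (min_le_left _ _)⟩

lemma clipUnit_cases (t : ℝ) :
    (1 ≤ t ∧ clipUnit t = 1) ∨ (t ≤ -1 ∧ clipUnit t = -1) ∨ (|t| ≤ 1 ∧ clipUnit t = t) := by
  rcases le_total 1 t with h | h
  · exact .inl ⟨h, by rw [clipUnit, min_eq_left h, max_eq_right (by norm_num)]⟩
  rcases le_total t (-1) with h' | h'
  · exact .inr (.inl ⟨h', by rw [clipUnit, min_eq_right h, max_eq_left h']⟩)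
  · exact .inr (.inr ⟨abs_le.2 ⟨h', h⟩, by rw [clipUnit, min_eq_right h, max_eq_right h']⟩)

section Clip

variable {a : ℝ}

lemma abs_clipUnit_div_sub_le (ha : 0 < a) (ha₁ : a ≤ 1) {t : ℝ} (ht : |t| ≤ 1) :
    |clipUnit (t / a) - t| ≤ 1 - a := by
  obtain ⟨u, rfl⟩ : ∃ u, t = a * u := ⟨t / a, by field_simp⟩
  rw [mul_div_cancel_left₀ u ha.ne']
  obtain ⟨ht₁, ht₂⟩ := abs_le.1 ht
  rcases clipUnit_cases u with ⟨hu, hc⟩ | ⟨hu, hc⟩ | ⟨hu, hc⟩ <;> rw [hc, abs_le]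
  · constructor <;> nlinarith
  · constructor <;> nlinarith
  · obtain ⟨hu₁, hu₂⟩ := abs_le.1 hu
    constructor <;> nlinarith

lemma abs_two_mul_sub_clipUnit_div_le (ha : 0 < a) (ha₁ : a ≤ 1) {t : ℝ} (ht : |t| ≤ 1) :
    |2 * t - clipUnit (t / a)| ≤ 1 := by
  obtain ⟨u, rfl⟩ : ∃ u, t = a * u := ⟨t / a, by field_simp⟩
  rw [mul_div_cancel_left₀ u ha.ne']
  obtain ⟨ht₁, ht₂⟩ := abs_le.1 ht
  rcases clipUnit_cases u with ⟨hu, hc⟩ | ⟨hu, hc⟩ | ⟨hu, hc⟩ <;> rw [hc, abs_le]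
  · constructor <;> nlinarith
  · constructor <;> nlinarith
  · obtain ⟨hu₁, hu₂⟩ := abs_le.1 hu
    constructor <;> nlinarith

lemma clipUnit_div_mul_eq_abs (ha : 0 < a) {t y : ℝ} (hy : |y| ≤ 1) (h : a < t * y) :
    clipUnit (t / a) * y = |y| := by
  obtain ⟨u, rfl⟩ : ∃ u, t = a * u := ⟨t / a, by field_simp⟩
  rw [mul_div_cancel_left₀ u ha.ne']
  have huy : 1 < u * y := lt_of_mul_lt_mul_left (by linarith) ha.le
  obtain ⟨hy₁, hy₂⟩ := abs_le.1 hy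
  rcases clipUnit_cases u with ⟨hu, hc⟩ | ⟨hu, hc⟩ | ⟨hu, hc⟩ <;> rw [hc]
  · rw [abs_of_nonneg (by nlinarith), one_mul]
  · rw [abs_of_nonpos (by nlinarith), neg_one_mul]
  · obtain ⟨hu₁, hu₂⟩ := abs_le.1 hu
    nlinarith

end Clip

lemma abs_add_mul_le_one_add_mul {a b t : ℝ} (ha : |a| ≤ 1) (hb : |b| ≤ 1) (ht₀ : 0 ≤ t)
    (ht₁ : t ≤ 1) : |a + t * b| ≤ 1 + t * (a * b) := by
  obtain ⟨ha₁, ha₂⟩ := abs_le.1 ha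
  obtain ⟨hb₁, hb₂⟩ := abs_le.1 hb
  have htb₁ : -1 ≤ t * b := by nlinarith
  have htb₂ : t * b ≤ 1 := by nlinarith
  rw [abs_le]
  constructor <;> nlinarith [mul_nonneg (sub_nonneg.2 ha₂) (sub_nonneg.2 htb₂),
    mul_nonneg (neg_le_iff_add_nonneg'.1 ha₁) (neg_le_iff_add_nonneg'.1 htb₁)]

lemma abs_one_add_mul_sub_mul_le {a b t : ℝ} (ha : |a| ≤ 1) (hb : |b| ≤ 1)
    (hab : a * b = |b|) (ht₀ : 0 ≤ t) (ht₁ : t ≤ 1) : |(1 + t) * b - t * a| ≤ 1 := by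
  obtain ⟨ha₁, ha₂⟩ := abs_le.1 ha
  obtain ⟨hb₁, hb₂⟩ := abs_le.1 hb
  rcases lt_trichotomy b 0 with hb | rfl | hb
  · have : a = -1 := by rw [abs_of_neg hb] at hab; nlinarith
    subst this
    rw [abs_le]; constructor <;> nlinarith
  · simpa [abs_mul, abs_of_nonneg ht₀] using mul_le_one₀ ht₁ (abs_nonneg a) ha
  · have : a = 1 := by rw [abs_of_pos hb] at hab; nlinarith
    subst this
    rw [abs_le]; constructor <;> nlinarith

lemma abs_mul_add_one_sub_mul_le {t a b c : ℝ} (ht₀ : 0 ≤ t) (ht₁ : t ≤ 1) (ha : |a| ≤ c)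
    (hb : |b| ≤ c) : |t * a + (1 - t) * b| ≤ c := by
  obtain ⟨ha₁, ha₂⟩ := abs_le.1 ha
  obtain ⟨hb₁, hb₂⟩ := abs_le.1 hb
  rw [abs_le]; constructor <;> nlinarith

namespace ContinuousLinearMap

variable {E : Type*} [SeminormedAddCommGroup E] [NormedSpace ℝ E] {ℓ : E →L[ℝ] ℝ}

lemma abs_apply_le_one (hℓ : ‖ℓ‖ ≤ 1) {u : E} (hu : ‖u‖ ≤ 1) : |ℓ u| ≤ 1 :=
  (ℓ.le_opNorm u).trans (mul_le_one₀ hℓ (norm_nonneg u) hu)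

lemma norm_eq_one_of_apply_eq_one (hℓ : ‖ℓ‖ ≤ 1) {u : E} (hu : ‖u‖ ≤ 1) (h : ℓ u = 1) :
    ‖ℓ‖ = 1 ∧ ‖u‖ = 1 := by
  have : 1 ≤ ‖ℓ‖ * ‖u‖ := by simpa [h] using ℓ.le_opNorm u
  constructor <;> nlinarith [norm_nonneg ℓ, norm_nonneg u]

lemma apply_eq_of_add_eq_two_smul (hℓ : ‖ℓ‖ ≤ 1) {u v x : E} (hu : ‖u‖ ≤ 1) (hv : ‖v‖ ≤ 1)
    (huv : u + v = (2 : ℝ) • x) (hx : |ℓ x| = 1) : ℓ u = ℓ x := by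
  have hsum : ℓ u + ℓ v = 2 * ℓ x := by rw [← map_add, huv, map_smul, smul_eq_mul]
  obtain ⟨hu₁, hu₂⟩ := abs_le.1 (abs_apply_le_one hℓ hu)
  obtain ⟨hv₁, hv₂⟩ := abs_le.1 (abs_apply_le_one hℓ hv)
  rcases (abs_eq zero_le_one).1 hx with h | h <;> rw [h] at hsum ⊢ <;> linarith

end ContinuousLinearMap

namespace ZeroAtInftyContinuousMap

variable {L : Type*} [TopologicalSpace L]

lemma abs_apply_le_norm (f : C₀(L, ℝ)) (x : L) : |f x| ≤ ‖f‖ :=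
  f.toBCF.norm_coe_le_norm x

lemma norm_le_of_forall_abs_le {f : C₀(L, ℝ)} {C : ℝ} (hC : 0 ≤ C) (h : ∀ x, |f x| ≤ C) :
    ‖f‖ ≤ C :=
  (BoundedContinuousFunction.norm_le hC).2 h

lemma abs_apply_le_of_norm_le {f : C₀(L, ℝ)} {C : ℝ} (hf : ‖f‖ ≤ C) (x : L) : |f x| ≤ C :=
  (abs_apply_le_norm f x).trans hf

variable {β γ : Type*} [TopologicalSpace β] [Zero β] [TopologicalSpace γ] [Zero γ]

def postcomp (k : β → γ) (hk : Continuous k) (hk₀ : k 0 = 0) (f : C₀(L, β)) : C₀(L, γ) where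
  toFun x := k (f x)
  continuous_toFun := hk.comp f.continuous
  zero_at_infty' := hk₀ ▸ (hk.tendsto 0).comp f.zero_at_infty'

@[simp] lemma postcomp_apply (k : β → γ) (hk : Continuous k) (hk₀ : k 0 = 0) (f : C₀(L, β))
    (x : L) : postcomp k hk hk₀ f x = k (f x) := rfl

section NormingPair

variable {μ : C₀(L, ℝ) →L[ℝ] ℝ} {g ψ : C₀(L, ℝ)}

lemma apply_le_of_forall_abs_le (hμ : ‖μ‖ ≤ 1) {W : C₀(L, ℝ)} {C : ℝ} (hC : 0 ≤ C)
    (h : ∀ x, |W x| ≤ C) : μ W ≤ C :=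
  calc μ W ≤ ‖μ‖ * ‖W‖ := (Real.le_norm_self _).trans (μ.le_opNorm W)
  _ ≤ 1 * C := mul_le_mul hμ (norm_le_of_forall_abs_le hC h) (norm_nonneg _) zero_le_one
  _ = C := one_mul C

lemma apply_mul_le_one (hμ : ‖μ‖ ≤ 1) (hg : ‖g‖ ≤ 1) (hψ : ∀ x, ψ x ∈ Set.Icc (0 : ℝ) 1) :
    μ (ψ * g) ≤ 1 :=
  apply_le_of_forall_abs_le hμ zero_le_one fun x => by
    rw [mul_apply, abs_mul]
    exact mul_le_one₀ (abs_le.2 ⟨by linarith [(hψ x).1], (hψ x).2⟩) (abs_nonneg _)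
      (abs_apply_le_of_norm_le hg x)

lemma apply_mul_le_norm_mul (hμ : ‖μ‖ ≤ 1) (hg : ‖g‖ ≤ 1) (hμg : μ g = 1)
    (hψ : ∀ x, ψ x ∈ Set.Icc (0 : ℝ) 1) (h : C₀(L, ℝ)) : μ (ψ * h) ≤ ‖h‖ * μ (ψ * g) := by
  have hW : ∀ x, |(ψ * h + ‖h‖ • (g - ψ * g)) x| ≤ ‖h‖ := fun x => by
    have e : (ψ * h + ‖h‖ • (g - ψ * g)) x = ψ x * h x + (1 - ψ x) * (‖h‖ * g x) := by
      simp only [add_apply, mul_apply, smul_apply, sub_apply, smul_eq_mul]; ring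
    rw [e]
    refine abs_mul_add_one_sub_mul_le (hψ x).1 (hψ x).2 (abs_apply_le_norm h x) ?_
    rw [abs_mul, abs_norm]
    exact mul_le_of_le_one_right (norm_nonneg h) (abs_apply_le_of_norm_le hg x)
  have := apply_le_of_forall_abs_le hμ (norm_nonneg h) hW
  rw [map_add, map_smul, map_sub, hμg, smul_eq_mul] at this
  linarith

lemma abs_apply_mul_le_norm_mul (hμ : ‖μ‖ ≤ 1) (hg : ‖g‖ ≤ 1) (hμg : μ g = 1)
    (hψ : ∀ x, ψ x ∈ Set.Icc (0 : ℝ) 1) (h : C₀(L, ℝ)) : |μ (ψ * h)| ≤ ‖h‖ * μ (ψ * g) := by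
  have := apply_mul_le_norm_mul hμ hg hμg hψ (-h)
  rw [show ψ * -h = -(ψ * h) from mul_neg ψ h, map_neg, norm_neg] at this
  exact abs_le.2 ⟨by linarith, apply_mul_le_norm_mul hμ hg hμg hψ h⟩

lemma apply_sub_apply_mul_le (hμ : ‖μ‖ ≤ 1) (hg : ‖g‖ ≤ 1) (hψ : ∀ x, ψ x ∈ Set.Icc (0 : ℝ) 1)
    (h : C₀(L, ℝ)) : μ h - μ (ψ * h) ≤ (1 - μ (ψ * g)) * ‖h‖ := by
  have hW : ∀ x, |(h - ψ * h + ‖h‖ • (ψ * g)) x| ≤ ‖h‖ := fun x => by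
    have e : (h - ψ * h + ‖h‖ • (ψ * g)) x
        = (1 - ψ x) * h x + (1 - (1 - ψ x)) * (‖h‖ * g x) := by
      simp only [add_apply, mul_apply, smul_apply, sub_apply, smul_eq_mul]; ring
    rw [e]
    refine abs_mul_add_one_sub_mul_le (by linarith [(hψ x).2]) (by linarith [(hψ x).1])
      (abs_apply_le_norm h x) ?_
    rw [abs_mul, abs_norm]
    exact mul_le_of_le_one_right (norm_nonneg h) (abs_apply_le_of_norm_le hg x)
  have := apply_le_of_forall_abs_le hμ (norm_nonneg h) hW
  rw [map_add, map_smul, map_sub, smul_eq_mul] at this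
  linarith

lemma abs_apply_sub_apply_mul_le (hμ : ‖μ‖ ≤ 1) (hg : ‖g‖ ≤ 1)
    (hψ : ∀ x, ψ x ∈ Set.Icc (0 : ℝ) 1) (h : C₀(L, ℝ)) :
    |μ h - μ (ψ * h)| ≤ (1 - μ (ψ * g)) * ‖h‖ := by
  have := apply_sub_apply_mul_le hμ hg hψ (-h)
  rw [show ψ * -h = -(ψ * h) from mul_neg ψ h, map_neg, map_neg, norm_neg] at this
  exact abs_le.2 ⟨by linarith, apply_sub_apply_mul_le hμ hg hψ h⟩

lemma mul_one_sub_apply_mul_le (hμ : ‖μ‖ ≤ 1) (hg : ‖g‖ ≤ 1) (hμg : μ g = 1)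
    (hψ : ∀ x, ψ x ∈ Set.Icc (0 : ℝ) 1) {f : C₀(L, ℝ)} (hf : ‖f‖ ≤ 1) {ρ : ℝ} (hρ₀ : 0 ≤ ρ)
    (hρ₁ : ρ ≤ 1) (hψf : ∀ x, ψ x < 1 → f x * g x ≤ 1 - ρ) :
    ρ * (1 - μ (ψ * g)) ≤ 1 - μ f := by
  have hW : ∀ x, |(f + g - ρ • (ψ * g)) x| ≤ 2 - ρ := fun x => by
    obtain ⟨hψ₀, hψ₁⟩ := hψ x
    have hfx := abs_apply_le_of_norm_le hf x
    have hgx := abs_apply_le_of_norm_le hg x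
    have e : (f + g - ρ • (ψ * g)) x = f x + (1 - ρ * ψ x) * g x := by
      simp only [add_apply, mul_apply, smul_apply, sub_apply, smul_eq_mul]; ring
    have hfg : f x * g x ≤ 1 :=
      (le_abs_self _).trans (abs_mul (f x) (g x) ▸ mul_le_one₀ hfx (abs_nonneg _) hgx)
    have hρψ : ρ * ψ x ≤ 1 := mul_le_one₀ hρ₁ hψ₀ hψ₁
    rw [e]
    refine (abs_add_mul_le_one_add_mul hfx hgx (by linarith) (by nlinarith)).trans ?_
    rcases hψ₁.lt_or_eq with hlt | heq
    · have := hψf x hlt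
      rcases le_total 0 (f x * g x) with hp | hp
      · nlinarith [mul_nonneg (mul_nonneg hρ₀ hψ₀) hp]
      · nlinarith [mul_nonpos_of_nonneg_of_nonpos (sub_nonneg.2 hρψ) hp]
    · rw [heq, mul_one]
      nlinarith [mul_le_of_le_one_right (sub_nonneg.2 hρ₁) hfg]
  have := apply_le_of_forall_abs_le hμ (by linarith) hW
  rw [map_sub, map_add, map_smul, hμg, smul_eq_mul] at this
  linarith

lemma apply_mul_eq_of_mul_eq_abs (hμ : ‖μ‖ ≤ 1) (hg : ‖g‖ ≤ 1) (hμg : μ g = 1)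
    (hψ : ∀ x, ψ x ∈ Set.Icc (0 : ℝ) 1) {f : C₀(L, ℝ)} (hf : ‖f‖ ≤ 1)
    (hfg : ∀ x, 0 < ψ x → f x * g x = |g x|) : μ (ψ * f) = μ (ψ * g) := by
  have upper : μ (g - ψ * g + ψ * f) ≤ 1 :=
    apply_le_of_forall_abs_le hμ zero_le_one fun x => by
      have e : (g - ψ * g + ψ * f) x = ψ x * f x + (1 - ψ x) * g x := by
        simp only [add_apply, mul_apply, sub_apply]; ring
      rw [e]
      exact abs_mul_add_one_sub_mul_le (hψ x).1 (hψ x).2 (abs_apply_le_of_norm_le hf x)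
        (abs_apply_le_of_norm_le hg x)
  have lower : μ (g + ψ * g - ψ * f) ≤ 1 :=
    apply_le_of_forall_abs_le hμ zero_le_one fun x => by
      have e : (g + ψ * g - ψ * f) x = (1 + ψ x) * g x - ψ x * f x := by
        simp only [add_apply, mul_apply, sub_apply]; ring
      rw [e]
      rcases (hψ x).1.lt_or_eq with hpos | hzero
      · exact abs_one_add_mul_sub_mul_le (abs_apply_le_of_norm_le hf x)
          (abs_apply_le_of_norm_le hg x) (hfg x hpos) (hψ x).1 (hψ x).2
      · simpa [← hzero] using abs_apply_le_of_norm_le hg x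
  rw [map_add, map_sub, hμg] at upper
  rw [map_sub, map_add, hμg] at lower
  linarith

noncomputable def reweight (μ : C₀(L, ℝ) →L[ℝ] ℝ) (g ψ : C₀(L, ℝ)) : C₀(L, ℝ) →L[ℝ] ℝ :=
  (μ (ψ * g))⁻¹ • μ.comp (ContinuousLinearMap.mul ℝ C₀(L, ℝ) ψ)

lemma reweight_apply (f : C₀(L, ℝ)) : reweight μ g ψ f = (μ (ψ * g))⁻¹ * μ (ψ * f) := rfl

lemma reweight_apply_self (h : μ (ψ * g) ≠ 0) : reweight μ g ψ g = 1 := inv_mul_cancel₀ h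

lemma norm_reweight_le_one (hμ : ‖μ‖ ≤ 1) (hg : ‖g‖ ≤ 1) (hμg : μ g = 1)
    (hψ : ∀ x, ψ x ∈ Set.Icc (0 : ℝ) 1) (hm : 0 < μ (ψ * g)) : ‖reweight μ g ψ‖ ≤ 1 :=
  ContinuousLinearMap.opNorm_le_bound _ zero_le_one fun f => by
    rw [reweight_apply, Real.norm_eq_abs, abs_mul, abs_inv, abs_of_pos hm, one_mul,
      inv_mul_le_iff₀ hm]
    exact (abs_apply_mul_le_norm_mul hμ hg hμg hψ f).trans_eq (mul_comm _ _)

lemma norm_reweight_sub_le (hμ : ‖μ‖ ≤ 1) (hg : ‖g‖ ≤ 1) (hμg : μ g = 1)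
    (hψ : ∀ x, ψ x ∈ Set.Icc (0 : ℝ) 1) (hm : 0 < μ (ψ * g)) :
    ‖reweight μ g ψ - μ‖ ≤ 2 * (1 - μ (ψ * g)) := by
  set m := μ (ψ * g)
  have hm₁ : m ≤ 1 := apply_mul_le_one hμ hg hψ
  refine ContinuousLinearMap.opNorm_le_bound _ (by linarith) fun f => ?_
  have hrenorm : |(m⁻¹ - 1) * μ (ψ * f)| ≤ (1 - m) * ‖f‖ := by
    rw [abs_mul, abs_of_nonneg (sub_nonneg.2 (one_le_inv₀ hm |>.2 hm₁))]
    calc (m⁻¹ - 1) * |μ (ψ * f)| ≤ (m⁻¹ - 1) * (‖f‖ * m) :=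
          mul_le_mul_of_nonneg_left (abs_apply_mul_le_norm_mul hμ hg hμg hψ f)
            (sub_nonneg.2 (one_le_inv₀ hm |>.2 hm₁))
    _ = (1 - m) * ‖f‖ := by field_simp
  have e : (reweight μ g ψ - μ) f = (m⁻¹ - 1) * μ (ψ * f) - (μ f - μ (ψ * f)) := by
    rw [_root_.sub_apply, reweight_apply]; ring
  rw [e, Real.norm_eq_abs]
  calc _ ≤ (1 - m) * ‖f‖ + (1 - m) * ‖f‖ :=
        (abs_sub _ _).trans (add_le_add hrenorm (abs_apply_sub_apply_mul_le hμ hg hψ f))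
  _ = 2 * (1 - m) * ‖f‖ := by ring

end NormingPair

lemma exists_weight_and_saturation {f₀ g : C₀(L, ℝ)} (hf₀ : ‖f₀‖ ≤ 1) (hg : ‖g‖ ≤ 1) {ρ : ℝ}
    (hρ₀ : 0 < ρ) (hρ : ρ < 1 / 2) :
    ∃ ψ f₁ : C₀(L, ℝ), (∀ x, ψ x ∈ Set.Icc (0 : ℝ) 1) ∧
      (∀ x, ψ x < 1 → f₀ x * g x ≤ 1 - ρ) ∧ (∀ x, 0 < ψ x → f₁ x * g x = |g x|) ∧
      ‖f₁‖ ≤ 1 ∧ ‖f₁ - f₀‖ ≤ 2 * ρ ∧ ‖(2 : ℝ) • f₀ - f₁‖ ≤ 1 := by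
  have ha : 0 < 1 - 2 * ρ := by linarith
  have hf₀x x : |f₀ x| ≤ 1 := abs_apply_le_of_norm_le hf₀ x
  refine ⟨postcomp (fun t => Real.smoothTransition ((t - (1 - 2 * ρ)) / ρ)) (by fun_prop)
      (Real.smoothTransition.zero_of_nonpos (div_nonpos_of_nonpos_of_nonneg (by linarith) hρ₀.le))
      (f₀ * g),
    postcomp (fun t => clipUnit (t / (1 - 2 * ρ)))
      (continuous_clipUnit.comp (continuous_id.div_const _)) (by rw [zero_div, clipUnit_zero]) f₀,
    fun x => ⟨Real.smoothTransition.nonneg _, Real.smoothTransition.le_one _⟩,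
    fun x hx => ?_, fun x hx => ?_, norm_le_of_forall_abs_le zero_le_one fun x => ?_,
    norm_le_of_forall_abs_le (by linarith) fun x => ?_,
    norm_le_of_forall_abs_le zero_le_one fun x => ?_⟩
  · have := mt (Real.smoothTransition.one_of_one_le (x := _)) hx.ne
    rw [one_le_div hρ₀, not_le, mul_apply] at this
    linarith
  · have := not_le.1 (mt (Real.smoothTransition.zero_of_nonpos (x := _)) hx.ne')
    rw [div_pos_iff_of_pos_right hρ₀, mul_apply] at this
    exact clipUnit_div_mul_eq_abs ha (abs_apply_le_of_norm_le hg x) (by linarith)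
  · exact abs_clipUnit_le _
  · rw [sub_apply, postcomp_apply]
    linarith [abs_clipUnit_div_sub_le ha (by linarith) (hf₀x x)]
  · rw [sub_apply, smul_apply, postcomp_apply, smul_eq_mul]
    exact abs_two_mul_sub_clipUnit_div_le ha (by linarith) (hf₀x x)

theorem exists_norming_pair_near_of_one_sub_lt {ρ : ℝ} (hρ₀ : 0 < ρ) (hρ : ρ < 1 / 2)
    {f₀ : C₀(L, ℝ)} {μ : C₀(L, ℝ) →L[ℝ] ℝ} {T : C₀(L, ℝ) →L[ℝ] C₀(L, ℝ)} (hf₀ : ‖f₀‖ ≤ 1)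
    (hμ : ‖μ‖ ≤ 1) (hT : ‖T‖ ≤ 1) (hμf₀ : 1 - ρ < μ f₀) (hμT : |μ (T f₀)| = 1) :
    ∃ (f₁ : C₀(L, ℝ)) (ν : C₀(L, ℝ) →L[ℝ] ℝ), ‖f₁‖ = 1 ∧ ‖ν‖ = 1 ∧ |ν (T f₁)| = 1 ∧
      ν f₁ = 1 ∧ ‖f₁ - f₀‖ ≤ 2 * ρ ∧ ρ * ‖ν - μ‖ ≤ 2 * (1 - μ f₀) := by
  set s := μ (T f₀)
  set g := s • T f₀
  have hs : s * s = 1 := by rw [← abs_mul_abs_self, hμT, one_mul]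
  have hg : ‖g‖ ≤ 1 := by
    rw [norm_smul, Real.norm_eq_abs, hμT, one_mul]
    simpa using T.le_of_opNorm_le hT f₀ |>.trans (mul_le_one₀ le_rfl (norm_nonneg _) hf₀)
  have hμg : μ g = 1 := by rw [map_smul, smul_eq_mul, hs]
  obtain ⟨ψ, f₁, hψ, hψf₀, hf₁g, hf₁, hf₁f₀, hd⟩ := exists_weight_and_saturation hf₀ hg hρ₀ hρ
  set m := μ (ψ * g)
  have hmass : ρ * (1 - m) ≤ 1 - μ f₀ :=
    mul_one_sub_apply_mul_le hμ hg hμg hψ hf₀ hρ₀.le (by linarith) hψf₀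
  have hm : 0 < m := by nlinarith
  set ν := reweight μ g ψ
  have hν : ‖ν‖ ≤ 1 := norm_reweight_le_one hμ hg hμg hψ hm
  have hνf₁ : ν f₁ = 1 := by
    rw [reweight_apply, apply_mul_eq_of_mul_eq_abs hμ hg hμg hψ hf₁ hf₁g]
    exact inv_mul_cancel₀ hm.ne'
  have hνTf₀ : ν (T f₀) = s := by
    rw [show T f₀ = s • g by rw [smul_smul, hs, one_smul], map_smul, reweight_apply_self hm.ne',
      smul_eq_mul, mul_one]
  have hνTf₁ : ν (T f₁) = ν (T f₀) :=
    (ν.comp T).apply_eq_of_add_eq_two_smul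
      ((ν.opNorm_comp_le T).trans (mul_le_one₀ hν (norm_nonneg _) hT)) hf₁ hd (by abel)
      (by rwa [ContinuousLinearMap.comp_apply, hνTf₀])
  obtain ⟨hν₁, hf₁₁⟩ := ν.norm_eq_one_of_apply_eq_one hν hf₁ hνf₁
  refine ⟨f₁, ν, hf₁₁, hν₁, by rwa [hνTf₁, hνTf₀], hνf₁, hf₁f₀, ?_⟩
  calc ρ * ‖ν - μ‖ ≤ ρ * (2 * (1 - m)) :=
        mul_le_mul_of_nonneg_left (norm_reweight_sub_le hμ hg hμg hψ hm) hρ₀.le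
  _ ≤ 2 * (1 - μ f₀) := by linarith

theorem exists_norming_pair_near {ε : ℝ} (hε : 0 < ε) (hε₅ : ε < 5) {f₀ : C₀(L, ℝ)}
    {μ : C₀(L, ℝ) →L[ℝ] ℝ} {T : C₀(L, ℝ) →L[ℝ] C₀(L, ℝ)} (hf₀ : ‖f₀‖ ≤ 1) (hμ : ‖μ‖ ≤ 1)
    (hT : ‖T‖ ≤ 1) (hμf₀ : 1 - ε ^ 2 / 50 < μ f₀) (hμT : |μ (T f₀)| = 1) :
    ∃ (f₁ : C₀(L, ℝ)) (ν : C₀(L, ℝ) →L[ℝ] ℝ), ‖f₁‖ = 1 ∧ ‖ν‖ = 1 ∧ |ν (T f₁)| = 1 ∧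
      ν f₁ = 1 ∧ ‖f₁ - f₀‖ < ε ∧ ‖ν - μ‖ < ε := by
  obtain ⟨f₁, ν, hf₁, hν, hνT, hνf₁, hf₁f₀, hνμ⟩ :=
    exists_norming_pair_near_of_one_sub_lt (ρ := ε / 10) (by positivity) (by linarith) hf₀ hμ
      hT (by nlinarith) hμT
  exact ⟨f₁, ν, hf₁, hν, hνT, hνf₁, by linarith, by nlinarith [norm_nonneg (ν - μ)]⟩

end ZeroAtInftyContinuousMap

theorem propertyNu_C0_real_general (L : Type*) [TopologicalSpace L] :
    (∀ ε : ℝ, 0 < ε → ε < 1 / 4 →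
      ∀ (f₀ : C₀(L, ℝ)) (μ : C₀(L, ℝ) →L[ℝ] ℝ) (T : C₀(L, ℝ) →L[ℝ] C₀(L, ℝ)),
        ‖f₀‖ = 1 → ‖μ‖ = 1 → ‖T‖ = 1 → 1 - ε ^ 2 / 50 < μ f₀ → |μ (T f₀)| = 1 →
        ∃ (f₁ : C₀(L, ℝ)) (ν : C₀(L, ℝ) →L[ℝ] ℝ),
          ‖f₁‖ = 1 ∧ ‖ν‖ = 1 ∧ |ν (T f₁)| = 1 ∧ ν f₁ = 1 ∧
          ‖f₁ - f₀‖ < ε ∧ ‖ν - μ‖ < ε) ∧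
    PropertyNu ℝ C₀(L, ℝ) := by
  refine ⟨fun ε hε _ f₀ μ T hf₀ hμ hT hμf₀ hμT =>
      ZeroAtInftyContinuousMap.exists_norming_pair_near hε (by linarith) hf₀.le hμ.le hT.le
        hμf₀ hμT,
    fun ε hε => ⟨min ε (1 / 5) ^ 2 / 50, by positivity, fun T x₀ f₀ hT hx₀ hf₀ hre hTx₀ => ?_⟩⟩
  have hε' : min ε (1 / 5) ≤ ε := min_le_left _ _
  obtain ⟨x₁, f₁, hx₁, hf₁, hf₁T, hf₁x₁, hx₁x₀, hf₁f₀⟩ :=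
    ZeroAtInftyContinuousMap.exists_norming_pair_near (ε := min ε (1 / 5))
      (lt_min hε (by norm_num)) ((min_le_right _ _).trans_lt (by norm_num)) hx₀.le hf₀.le hT.le
      (by rwa [RCLike.re_to_real] at hre) (by rwa [Real.norm_eq_abs] at hTx₀)
  exact ⟨T, x₁, f₁, hT, hx₁, hf₁, by rwa [Real.norm_eq_abs], hf₁x₁, hx₁x₀.trans_le hε',
    hf₁f₀.trans_le hε', by simpa using hε⟩

/-- For the real space `C₀(L)`: if `0 < ε < 1/4`, `f₀ ∈ S_{C₀(L)}`, `μ ∈ S_{C₀(L)*}` and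
`‖T‖ = 1` satisfy `μ(f₀) > 1 - ε²/50` and `|μ(T f₀)| = 1`, then there exist `f₁ ∈ S_{C₀(L)}`
and `ν ∈ S_{C₀(L)*}` with `|ν(T f₁)| = ν(f₁) = 1`, `‖f₁ - f₀‖ < ε` and `‖ν - μ‖ < ε`.
In particular, every real `C₀(L)` has property (nu). -/
theorem propertyNu_C0_real (L : Type*) [TopologicalSpace L] [LocallyCompactSpace L]
    [T2Space L] :
    (∀ ε : ℝ, 0 < ε → ε < 1 / 4 →
      ∀ (f₀ : C₀(L, ℝ)) (μ : C₀(L, ℝ) →L[ℝ] ℝ) (T : C₀(L, ℝ) →L[ℝ] C₀(L, ℝ)),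
        ‖f₀‖ = 1 → ‖μ‖ = 1 → ‖T‖ = 1 → 1 - ε ^ 2 / 50 < μ f₀ → |μ (T f₀)| = 1 →
        ∃ (f₁ : C₀(L, ℝ)) (ν : C₀(L, ℝ) →L[ℝ] ℝ),
          ‖f₁‖ = 1 ∧ ‖ν‖ = 1 ∧ |ν (T f₁)| = 1 ∧ ν f₁ = 1 ∧
          ‖f₁ - f₀‖ < ε ∧ ‖ν - μ‖ < ε) ∧
    PropertyNu ℝ C₀(L, ℝ) :=
  propertyNu_C0_real_general L
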